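/- There is an absolute constant C > 0 such that the following holds. Let μ be a permutation-invariant probability measure on ℝⁿ with respect to which all polynomials are integrable, let f be a multilinear polynomial in x₁,…,xₙ, and let τ > 0. Then there exists a set S ⊆ [n] with |S| ≤ C·Inf[f]/τ such that Inf_{ij}[f] < τ whenever i, j ∉ S. -/

import Mathlib

/-!
Write `Inf_{ij}[f] = ½ ‖f ∘ (i j) - f‖²`. Because `μ` is permutation invariant,
`σ ↦ ‖f ∘ σ - f‖` is subadditive, and `(i j) = (i k)(j k)(i k)` then gives the relaxed triangle
inequality `Inf_{ij} ≤ 6 (Inf_{ik} + Inf_{jk})` for every `k`. Summing over `k`,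
`n · Inf_{ij} ≤ 6 (I_i + I_j)` with `I_i = ∑_k Inf_{ik}`, so every pair outside
`S = {i | n τ / 12 ≤ I_i}` has influence below `τ`, while Markov's inequality bounds `|S|` by
`12 ∑_i I_i / (n τ) = 24 Inf[f] / τ`.
-/

open MvPolynomial MeasureTheory

/-- A multilinear polynomial: every monomial is squarefree. -/
def IsMultilinear {n : ℕ} (P : MvPolynomial (Fin n) ℝ) : Prop :=
  ∀ m ∈ P.support, ∀ i, m i ≤ 1

/-- A permutation-invariant probability measure on `ℝⁿ`. -/
def PermInvariant {n : ℕ} (μ : Measure (Fin n → ℝ)) : Prop :=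
  ∀ π : Equiv.Perm (Fin n), Measure.map (fun x => x ∘ π) μ = μ

/-- The influence of the pair `(i,j)`: `Inf_{ij}[f] = ½ E_μ[(f^{(i j)} - f)²]`,
where `f^{(i j)}` is `f` with the variables `x_i` and `x_j` swapped. -/
noncomputable def pairInf {n : ℕ} (μ : Measure (Fin n → ℝ))
    (f : MvPolynomial (Fin n) ℝ) (i j : Fin n) : ℝ :=
  (1 / 2) * ∫ x, (eval x (MvPolynomial.rename (⇑(Equiv.swap i j)) f) - eval x f) ^ 2 ∂μ

/-- The total influence `Inf[f] = (1/n) ∑_{i<j} Inf_{ij}[f]`. -/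
noncomputable def totalInf {n : ℕ} (μ : Measure (Fin n → ℝ))
    (f : MvPolynomial (Fin n) ℝ) : ℝ :=
  (1 / (n : ℝ)) * ∑ p ∈ Finset.univ.filter (fun p : Fin n × Fin n => p.1 < p.2),
    pairInf μ f p.1 p.2

open Finset

section QuasiMetric

variable {ι : Type*} [Fintype ι] {p : ι → ι → ℝ}

lemma card_filter_mul_le_sum {a : ι → ℝ} (ha : ∀ i, 0 ≤ a i) (θ : ℝ) :
    #{i | θ ≤ a i} * θ ≤ ∑ i, a i :=
  calc #{i | θ ≤ a i} * θ ≤ ∑ i with θ ≤ a i, a i := by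
        simpa using card_nsmul_le_sum _ a θ fun i hi => (mem_filter.1 hi).2
    _ ≤ ∑ i, a i := sum_le_sum_of_subset_of_nonneg (subset_univ _) fun i _ _ => ha i

lemma sum_sum_eq_two_mul_sum_lt [LinearOrder ι] (hsymm : ∀ i j, p i j = p j i)
    (hdiag : ∀ i, p i i = 0) :
    ∑ i, ∑ j, p i j = 2 * ∑ q : ι × ι with q.1 < q.2, p q.1 q.2 := by
  have hsplit : ∀ q : ι × ι,
      p q.1 q.2 = (if q.1 < q.2 then p q.1 q.2 else 0) + (if q.2 < q.1 then p q.2 q.1 else 0) := by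
    rintro ⟨i, j⟩
    rcases lt_trichotomy i j with h | rfl | h
    · simp [h, h.not_gt]
    · simp [hdiag]
    · simp [h, h.not_gt, hsymm i j]
  rw [← Fintype.sum_prod_type', Fintype.sum_congr _ _ hsplit, sum_add_distrib,
    Fintype.sum_equiv (Equiv.prodComm ι ι) (fun q => if q.2 < q.1 then p q.2 q.1 else 0)
      (fun q => if q.1 < q.2 then p q.1 q.2 else 0) (fun _ => rfl), sum_filter, two_mul]

lemma card_mul_le_add_sum {c : ℝ} {i j : ι} (h : ∀ k, p i j ≤ c * (p i k + p j k)) :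
    Fintype.card ι * p i j ≤ c * (∑ k, p i k + ∑ k, p j k) := by
  calc (Fintype.card ι : ℝ) * p i j = ∑ k : ι, p i j := by simp
    _ ≤ ∑ k, c * (p i k + p j k) := sum_le_sum fun k _ => h k
    _ = c * (∑ k, p i k + ∑ k, p j k) := by rw [← mul_sum, sum_add_distrib]

theorem exists_small_set_of_quasi_triangle [LinearOrder ι] {c τ : ℝ} (hc : 0 < c) (hτ : 0 < τ)
    (hnonneg : ∀ i j, 0 ≤ p i j) (hsymm : ∀ i j, p i j = p j i) (hdiag : ∀ i, p i i = 0)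
    (htri : ∀ i j k, p i j ≤ c * (p i k + p j k)) :
    ∃ S : Finset ι, (#S : ℝ) ≤ 4 * c * ((1 / (Fintype.card ι : ℝ)) *
        ∑ q : ι × ι with q.1 < q.2, p q.1 q.2) / τ ∧
      ∀ i j, i ∉ S → j ∉ S → p i j < τ := by
  set N : ℝ := (Fintype.card ι : ℝ)
  set θ := N * τ / (2 * c) with hθ
  have hrow : ∀ i, 0 ≤ ∑ k, p i k := fun i => sum_nonneg fun k _ => hnonneg i k
  set S : Finset ι := {i | θ ≤ ∑ k, p i k}
  refine ⟨S, ?_, fun i j hi hj => ?_⟩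
  · rcases isEmpty_or_nonempty ι with hι | hι
    · simp [Subsingleton.elim S ∅]
    · have hN : 0 < N := by simp [N, Fintype.card_pos]
      rw [le_div_iff₀ hτ]
      calc (#S : ℝ) * τ = 2 * c / N * (#S * θ) := by rw [hθ]; field_simp
        _ ≤ 2 * c / N * (2 * ∑ q : ι × ι with q.1 < q.2, p q.1 q.2) := by
          rw [← sum_sum_eq_two_mul_sum_lt hsymm hdiag]
          gcongr
          exact card_filter_mul_le_sum hrow θ
        _ = _ := by ring
  · have hN : 0 < N := by
      simpa [N] using Fintype.card_pos_iff.2 ⟨i⟩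
    simp only [S, mem_filter, mem_univ, true_and, not_le] at hi hj
    refine lt_of_mul_lt_mul_left ?_ hN.le
    calc N * p i j ≤ c * (∑ k, p i k + ∑ k, p j k) := card_mul_le_add_sum (htri i j)
      _ < c * (θ + θ) := by gcongr
      _ = N * τ := by rw [hθ]; field_simp; ring

end QuasiMetric

lemma integral_sq_eq_lpNorm_sq {α : Type*} [MeasurableSpace α] {μ : Measure α} {g : α → ℝ}
    (hg : AEStronglyMeasurable g μ) : ∫ x, g x ^ 2 ∂μ = lpNorm g 2 μ ^ 2 := by
  rw [lpNorm_eq_integral_norm_rpow_toReal two_ne_zero ENNReal.ofNat_ne_top hg]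
  simp only [ENNReal.toReal_ofNat, Real.rpow_two, Real.norm_eq_abs, sq_abs]
  rw [← Real.rpow_natCast, ← Real.rpow_mul (integral_nonneg fun x => sq_nonneg _)]
  norm_num

open Equiv
open scoped ENNReal

section PermInvariant

variable {n : ℕ} {μ : Measure (Fin n → ℝ)} {g : (Fin n → ℝ) → ℝ}

lemma PermInvariant.measurePreserving (hμ : PermInvariant μ) (σ : Perm (Fin n)) :
    MeasurePreserving (fun x : Fin n → ℝ => x ∘ σ) μ μ :=
  ⟨measurable_pi_lambda _ fun _ => measurable_pi_apply _, hμ σ⟩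

lemma lpNorm_comp_perm (hμ : PermInvariant μ) (hg : AEStronglyMeasurable g μ) (p : ℝ≥0∞)
    (σ : Perm (Fin n)) : lpNorm (fun x => g (x ∘ σ)) p μ = lpNorm g p μ := by
  have hσ := hμ.measurePreserving σ
  rw [← toReal_eLpNorm hg, ← eLpNorm_comp_measurePreserving hg hσ,
    toReal_eLpNorm (hg.comp_measurePreserving hσ)]
  rfl

noncomputable def permDisplacement (μ : Measure (Fin n → ℝ)) (g : (Fin n → ℝ) → ℝ)
    (σ : Perm (Fin n)) : ℝ :=
  lpNorm (fun x => g (x ∘ σ) - g x) 2 μ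

lemma permDisplacement_mul_le (hμ : PermInvariant μ) (hg : MemLp g 2 μ) (σ π : Perm (Fin n)) :
    permDisplacement μ g (σ * π) ≤ permDisplacement μ g σ + permDisplacement μ g π := by
  have hσ := hg.comp_measurePreserving (hμ.measurePreserving σ)
  have hπ := hg.comp_measurePreserving (hμ.measurePreserving π)
  have hσπ := hg.comp_measurePreserving (hμ.measurePreserving (σ * π))
  calc permDisplacement μ g (σ * π)
      ≤ lpNorm (fun x => g (x ∘ (σ * π)) - g (x ∘ σ)) 2 μ + permDisplacement μ g σ :=
        lpNorm_sub_le_lpNorm_sub_add_lpNorm_sub hσπ hσ one_le_two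
    _ = permDisplacement μ g π + permDisplacement μ g σ :=
        congrArg (· + _) (lpNorm_comp_perm hμ (hπ.sub hg).1 2 σ)
    _ = _ := add_comm _ _

lemma permDisplacement_swap_le (hμ : PermInvariant μ) (hg : MemLp g 2 μ) {i j k : Fin n}
    (hji : j ≠ i) (hjk : j ≠ k) :
    permDisplacement μ g (swap i j) ≤
      2 * permDisplacement μ g (swap i k) + permDisplacement μ g (swap j k) := by
  rw [← swap_mul_swap_mul_swap hjk hji, swap_comm k i]
  linarith [permDisplacement_mul_le hμ hg (swap i k * swap j k) (swap i k),
    permDisplacement_mul_le hμ hg (swap i k) (swap j k)]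

end PermInvariant

section PairInfluence

variable {n : ℕ} {μ : Measure (Fin n → ℝ)} (f : MvPolynomial (Fin n) ℝ)

lemma pairInf_eq_half_sq (i j : Fin n) :
    pairInf μ f i j = 1 / 2 * permDisplacement μ (fun x => eval x f) (swap i j) ^ 2 := by
  simp only [pairInf, permDisplacement, eval_rename]
  have hf := continuous_eval f
  rw [integral_sq_eq_lpNorm_sq (by fun_prop)]

lemma pairInf_nonneg (i j : Fin n) : 0 ≤ pairInf μ f i j := by
  rw [pairInf_eq_half_sq]
  positivity

lemma pairInf_comm (i j : Fin n) : pairInf μ f i j = pairInf μ f j i := by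
  rw [pairInf, pairInf, swap_comm]

@[simp]
lemma pairInf_self (i : Fin n) : pairInf μ f i i = 0 := by
  simp [pairInf]

lemma pairInf_le_of_ne (hμ : PermInvariant μ) (hf : MemLp (fun x => eval x f) 2 μ)
    {i j k : Fin n} (hji : j ≠ i) (hjk : j ≠ k) :
    pairInf μ f i j ≤ 6 * (pairInf μ f i k + pairInf μ f j k) := by
  have hd := permDisplacement_swap_le hμ hf hji hjk
  have hd0 : 0 ≤ permDisplacement μ (fun x => eval x f) (swap i j) := lpNorm_nonneg
  simp only [pairInf_eq_half_sq]
  nlinarith [sq_nonneg (permDisplacement μ (fun x => eval x f) (swap i k) -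
    permDisplacement μ (fun x => eval x f) (swap j k))]

lemma pairInf_le (hμ : PermInvariant μ) (hf : MemLp (fun x => eval x f) 2 μ) (i j k : Fin n) :
    pairInf μ f i j ≤ 6 * (pairInf μ f i k + pairInf μ f j k) := by
  have hnonneg := pairInf_nonneg (μ := μ) f
  rcases eq_or_ne j i with rfl | hji
  · simp only [pairInf_self]; linarith [hnonneg j k]
  rcases eq_or_ne j k with rfl | hjk
  · simp only [pairInf_self]; linarith [hnonneg i j]
  exact pairInf_le_of_ne f hμ hf hji hjk

end PairInfluence

lemma memLp_two_eval {n : ℕ} {μ : Measure (Fin n → ℝ)}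
    (hInt : ∀ P : MvPolynomial (Fin n) ℝ, Integrable (fun x => eval x P) μ)
    (f : MvPolynomial (Fin n) ℝ) : MemLp (fun x => eval x f) 2 μ :=
  (memLp_two_iff_integrable_sq (continuous_eval f).aestronglyMeasurable).2 <| by
    simpa [sq] using hInt (f * f)

/-- There is an absolute constant `C > 0` such that for every permutation-invariant
probability measure, every multilinear polynomial `f` and every `τ > 0`, there is a
set `S` of at most `C·Inf[f]/τ` coordinates such that `Inf_{ij}[f] < τ` whenever
`i, j ∉ S`. -/
theorem small_influences_off_a_small_set :
    ∃ C : ℝ, 0 < C ∧ ∀ (n : ℕ) (μ : Measure (Fin n → ℝ)),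
      IsProbabilityMeasure μ → PermInvariant μ →
      (∀ P : MvPolynomial (Fin n) ℝ, Integrable (fun x => eval x P) μ) →
      ∀ f : MvPolynomial (Fin n) ℝ, IsMultilinear f →
      ∀ τ : ℝ, 0 < τ →
      ∃ S : Finset (Fin n), (S.card : ℝ) ≤ C * totalInf μ f / τ ∧
        ∀ i j : Fin n, i ∉ S → j ∉ S → pairInf μ f i j < τ := by
  refine ⟨24, by norm_num, fun n μ _ hμ hInt f _ τ hτ => ?_⟩
  obtain ⟨S, hcard, hS⟩ := exists_small_set_of_quasi_triangle (c := 6) (by norm_num) hτ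
    (pairInf_nonneg f) (pairInf_comm f) (pairInf_self f) (pairInf_le f hμ (memLp_two_eval hInt f))
  exact ⟨S, hcard.trans_eq (by rw [totalInf, Fintype.card_fin]; ring), hS⟩
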